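/- Let w̃(ν) = (T/2)·e^{-iπTν}·sinc(Tν)/(1-(Tν)²) be the Fourier transform of the Hann window, and for k ≥ 2 let ν_k^w be the location of the maximum of |w̃| on the interval (k/T, (k+1)/T). Then ν_k^w < (k + 1/2)/T and |w̃(ν_k^w)| < T/(2π k³). -/

import Mathlib

/-!
Writing `x = Tν = k + t` with `t ∈ (0, 1)`, one has `|w̃(ν)| = T/(2π) · sin(πt)/(x³ - x)`.
An interior maximum is a stationary point, where `π cos(πt)(x³ - x) = sin(πt)(3x² - 1) > 0`;
so `cos(πt) > 0`, i.e. `t < 1/2`. The height bound `sin(πt) k³ < x³ - x` follows from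
`sin(πt) ≤ πt` for small `t` and from `sin(πt) ≤ 1` otherwise.
-/

noncomputable def hannFTFormula (T : ℝ) (ν : ℝ) : ℂ :=
  (T / 2 : ℂ) * Complex.exp (-Real.pi * T * ν * Complex.I) *
    ((Real.sin (Real.pi * (T * ν)) / (Real.pi * (T * ν)) : ℝ) : ℂ) / (1 - ((T * ν : ℝ) : ℂ) ^ 2)

open Real Set

theorem norm_hannFTFormula (T ν : ℝ) :
    ‖hannFTFormula T ν‖ = |T| * |sin (π * (T * ν))| / (2 * π * |(T * ν) ^ 3 - T * ν|) := by
  have hphase : ‖Complex.exp (-π * T * ν * Complex.I)‖ = 1 := by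
    rw [show -(π : ℂ) * T * ν * Complex.I = ((-(π * T * ν)) : ℝ) * Complex.I by push_cast; ring]
    exact Complex.norm_exp_ofReal_mul_I _
  have hden : ‖(1 : ℂ) - ((T * ν : ℝ) : ℂ) ^ 2‖ = |(T * ν) ^ 2 - 1| := by
    rw [← Complex.ofReal_one, ← Complex.ofReal_pow, ← Complex.ofReal_sub, Complex.norm_real,
      Real.norm_eq_abs, abs_sub_comm]
  rw [hannFTFormula, norm_div, norm_mul, norm_mul, hphase, hden, Complex.norm_real,
    Real.norm_eq_abs, Complex.norm_div, Complex.norm_real, Complex.norm_ofNat, Real.norm_eq_abs,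
    abs_div, abs_mul, abs_of_pos pi_pos,
    show (T * ν) ^ 3 - T * ν = (T * ν) * ((T * ν) ^ 2 - 1) by ring, abs_mul (T * ν)]
  ring


noncomputable def sidelobeProfile (k t : ℝ) : ℝ := sin (π * t) / ((k + t) ^ 3 - (k + t))

theorem cube_sub_self_pos {x : ℝ} (hx : 1 < x) : 0 < x ^ 3 - x := by
  have : 0 < x * (x ^ 2 - 1) := mul_pos (by linarith) (by nlinarith)
  linarith [show x ^ 3 - x = x * (x ^ 2 - 1) by ring]

theorem norm_hannFTFormula_add_div {T : ℝ} (hT : 0 < T) {k : ℕ} (hk : 1 ≤ k) {t : ℝ}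
    (ht : t ∈ Ioo (0 : ℝ) 1) :
    ‖hannFTFormula T ((k + t) / T)‖ = T / (2 * π) * sidelobeProfile k t := by
  have hk1 : (1 : ℝ) ≤ k := by exact_mod_cast hk
  have hx : T * ((k + t) / T) = k + t := by field_simp
  have hsin : |sin (π * (k + t))| = sin (π * t) := by
    rw [show π * (k + t) = π * t + k * π by ring, sin_add_nat_mul_pi, abs_mul, abs_pow, abs_neg,
      abs_one, one_pow, one_mul, abs_of_pos (sin_pos_of_pos_of_lt_pi
        (by nlinarith [pi_pos, ht.1]) (by nlinarith [pi_pos, ht.2]))]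
  rw [norm_hannFTFormula, hx, hsin, abs_of_pos hT,
    abs_of_pos (cube_sub_self_pos (by linarith [ht.1])), sidelobeProfile]
  field_simp

theorem isMaxOn_sidelobeProfile_of_isMaxOn_norm_hannFTFormula {T : ℝ} (hT : 0 < T) {k : ℕ}
    (hk : 1 ≤ k) {t : ℝ} (ht : t ∈ Ioo (0 : ℝ) 1)
    (hmax : IsMaxOn (fun ν => ‖hannFTFormula T ν‖) (Ioo (k / T) ((k + 1) / T)) ((k + t) / T)) :
    IsMaxOn (sidelobeProfile k) (Ioo 0 1) t := by
  intro s hs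
  have hν : (k + s) / T ∈ Ioo (k / T) ((k + 1) / T) :=
    ⟨by gcongr; linarith [hs.1], by gcongr; exact hs.2⟩
  have hle : ‖hannFTFormula T ((k + s) / T)‖ ≤ ‖hannFTFormula T ((k + t) / T)‖ := hmax hν
  rw [norm_hannFTFormula_add_div hT hk hs, norm_hannFTFormula_add_div hT hk ht] at hle
  exact le_of_mul_le_mul_left hle (by positivity)
theorem hasDerivAt_sidelobeProfile (k t : ℝ) (ht : (k + t) ^ 3 - (k + t) ≠ 0) :
    HasDerivAt (sidelobeProfile k)
      ((π * cos (π * t) * ((k + t) ^ 3 - (k + t)) - sin (π * t) * (3 * (k + t) ^ 2 - 1)) /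
        ((k + t) ^ 3 - (k + t)) ^ 2) t := by
  have hsin : HasDerivAt (fun s => sin (π * s)) (π * cos (π * t)) t :=
    ((hasDerivAt_id' t).const_mul π).sin.congr_deriv (by ring)
  have hshift := (hasDerivAt_id' t).const_add k
  have hden : HasDerivAt (fun s => (k + s) ^ 3 - (k + s)) (3 * (k + t) ^ 2 - 1) t :=
    ((hshift.pow 3).sub hshift).congr_deriv (by norm_num)
  exact hsin.div hden ht

theorem lt_one_half_of_isMaxOn_sidelobeProfile {k t : ℝ} (hk : 1 ≤ k) (ht : t ∈ Ioo (0 : ℝ) 1)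
    (hmax : IsMaxOn (sidelobeProfile k) (Ioo 0 1) t) : t < 1 / 2 := by
  have hpos : 0 < (k + t) ^ 3 - (k + t) := cube_sub_self_pos (by linarith [ht.1])
  have hstat := (hmax.isLocalMax (Ioo_mem_nhds ht.1 ht.2)).hasDerivAt_eq_zero
    (hasDerivAt_sidelobeProfile k t hpos.ne')
  rw [div_eq_zero_iff, sub_eq_zero, or_iff_left (by positivity)] at hstat
  have hrhs : 0 < sin (π * t) * (3 * (k + t) ^ 2 - 1) :=
    mul_pos (sin_pos_of_pos_of_lt_pi (by nlinarith [pi_pos, ht.1]) (by nlinarith [pi_pos, ht.2]))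
      (by nlinarith [ht.1])
  by_contra! hge
  have hcos : cos (π * t) ≤ 0 :=
    cos_nonpos_of_pi_div_two_le_of_le (by nlinarith [pi_pos]) (by nlinarith [pi_pos, ht.2])
  have hlhs : π * cos (π * t) * ((k + t) ^ 3 - (k + t)) ≤ 0 :=
    mul_nonpos_of_nonpos_of_nonneg (mul_nonpos_of_nonneg_of_nonpos pi_pos.le hcos) hpos.le
  linarith

theorem sin_pi_mul_mul_pow_three_lt {k t : ℝ} (hk : 2 ≤ k) (ht : 0 ≤ t) :
    sin (π * t) * k ^ 3 < (k + t) ^ 3 - (k + t) := by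
  have hk3 : 0 < k ^ 3 := by positivity
  have hexpand : (k + t) ^ 3 - (k + t) = k ^ 3 - k + t * (3 * k ^ 2 - 1) + t ^ 2 * (3 * k + t) := by
    ring
  have htail : 0 ≤ t ^ 2 * (3 * k + t) := by positivity
  rcases le_or_gt t (3 / 10) with hsmall | hlarge
  · have hsin : sin (π * t) * k ^ 3 ≤ t * (3.15 * k ^ 3) := by
      calc sin (π * t) * k ^ 3 ≤ π * t * k ^ 3 :=
            mul_le_mul_of_nonneg_right (sin_le (by positivity)) hk3.le
        _ ≤ 3.15 * t * k ^ 3 := by gcongr; exact pi_lt_d2.le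
        _ = t * (3.15 * k ^ 3) := by ring
    have hcoef : t * (3.15 * k ^ 3 - 3 * k ^ 2 + 1) ≤ 3 / 10 * (3.15 * k ^ 3 - 3 * k ^ 2 + 1) :=
      mul_le_mul_of_nonneg_right hsmall (by nlinarith)
    nlinarith
  · have hsin : sin (π * t) * k ^ 3 ≤ k ^ 3 := by
      simpa using mul_le_mul_of_nonneg_right (sin_le_one (π * t)) hk3.le
    have hlin : 3 / 10 * (3 * k ^ 2 - 1) ≤ t * (3 * k ^ 2 - 1) :=
      mul_le_mul_of_nonneg_right hlarge.le (by nlinarith)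
    nlinarith

theorem sidelobeProfile_lt_one_div_pow_three {k t : ℝ} (hk : 2 ≤ k) (ht : 0 ≤ t) :
    sidelobeProfile k t < 1 / k ^ 3 := by
  rw [sidelobeProfile, div_lt_div_iff₀ (cube_sub_self_pos (by linarith)) (by positivity)]
  linarith [sin_pi_mul_mul_pow_three_lt hk ht]

/-- Side lobe peak location and height bound: for `k ≥ 2`, the maximizer `ν_k^w` of
`|w̃|` on `(k/T, (k+1)/T)` satisfies `ν_k^w < (k + 1/2)/T` and
`|w̃(ν_k^w)| < T/(2π k³)`. -/
theorem hann_sidelobe_peak (T : ℝ) (hT : 0 < T) (k : ℕ) (hk : 2 ≤ k) (νkw : ℝ)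
    (hmem : νkw ∈ Set.Ioo ((k : ℝ) / T) (((k : ℝ) + 1) / T))
    (hmax : IsMaxOn (fun ν => ‖hannFTFormula T ν‖)
      (Set.Ioo ((k : ℝ) / T) (((k : ℝ) + 1) / T)) νkw) :
    νkw < ((k : ℝ) + 1 / 2) / T ∧
    ‖hannFTFormula T νkw‖ < T / (2 * Real.pi * (k : ℝ) ^ 3) := by
  obtain ⟨t, ht, rfl⟩ : ∃ t ∈ Ioo (0 : ℝ) 1, νkw = (k + t) / T := by
    refine ⟨T * νkw - k, ⟨?_, ?_⟩, by field_simp; ring⟩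
    · linarith [(div_lt_iff₀' hT).1 hmem.1]
    · linarith [(lt_div_iff₀' hT).1 hmem.2]
  have hk1 : 1 ≤ k := by omega
  have hk2 : (2 : ℝ) ≤ k := by exact_mod_cast hk
  have hpeak := isMaxOn_sidelobeProfile_of_isMaxOn_norm_hannFTFormula hT hk1 ht hmax
  constructor
  · have hhalf := lt_one_half_of_isMaxOn_sidelobeProfile (by linarith) ht hpeak
    gcongr
  · rw [norm_hannFTFormula_add_div hT hk1 ht]
    calc T / (2 * π) * sidelobeProfile k t < T / (2 * π) * (1 / (k : ℝ) ^ 3) :=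
          mul_lt_mul_of_pos_left (sidelobeProfile_lt_one_div_pow_three hk2 ht.1.le) (by positivity)
      _ = T / (2 * π * (k : ℝ) ^ 3) := by field_simp
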